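/- Let Δ : K⟨Y⟩ → K⟨⟨Y* ⊗ Y*⟩⟩ be the concatenation-morphism defined on letters by Δ(y_s) = y_s ⊗ 1 + 1 ⊗ y_s + Σ_{n,m} γ^{y_s}_{y_n,y_m} y_n ⊗ y_m. Then for all words u, v, w ∈ Y*, one has ⟨u ⧢_φ v, w⟩ = ⟨u ⊗ v, Δ(w)⟩. -/

import Mathlib

noncomputable section

open Finsupp

variable {K : Type*} [CommRing K] [Algebra ℚ K]
variable {Y : Type*} [DecidableEq Y]

/-- The word `w ∈ Y*` viewed as a basis element of `K⟨Y⟩`. -/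
def word (w : List Y) : List Y →₀ K := Finsupp.single w 1

/-- Left concatenation by a letter, as a linear endomorphism of `K⟨Y⟩`. -/
def consL (a : Y) : (List Y →₀ K) →ₗ[K] (List Y →₀ K) :=
  Finsupp.lmapDomain K K (List.cons a)

/-- `m` is the `φ`-deformed shuffle product: it satisfies the initialization
`1 ⧢ w = w ⧢ 1 = w` and the recursion
`(au) ⧢ (bv) = a (u ⧢ bv) + b (au ⧢ v) + φ(a,b)(u ⧢ v)`. -/
def IsPhiShuffle (φ : Y → Y → (Y →₀ K))
    (m : (List Y →₀ K) →ₗ[K] (List Y →₀ K) →ₗ[K] (List Y →₀ K)) : Prop :=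
  (∀ w : List Y, m (word []) (word w) = word w) ∧
  (∀ w : List Y, m (word w) (word []) = word w) ∧
  ∀ (a b : Y) (u v : List Y),
    m (word (a :: u)) (word (b :: v)) =
      consL a (m (word u) (word (b :: v))) + consL b (m (word (a :: u)) (word v)) +
      (φ a b).sum fun c k => k • consL c (m (word u) (word v))

/-- Bilinear extension of `φ` to `KY`. -/
def phiExt (φ : Y → Y → (Y →₀ K)) (p q : Y →₀ K) : Y →₀ K :=
  p.sum fun a ka => q.sum fun b kb => (ka * kb) • φ a b

/-- The extension of `φ` to `KY ⊗ KY → KY` is associative. -/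
def PhiAssoc (φ : Y → Y → (Y →₀ K)) : Prop :=
  ∀ a b c : Y, phiExt φ (φ a b) (Finsupp.single c 1) = phiExt φ (Finsupp.single a 1) (φ b c)

/-- The extension of `φ` is commutative. -/
def PhiComm (φ : Y → Y → (Y →₀ K)) : Prop := ∀ a b : Y, φ a b = φ b a

/-- `φ` is dualizable: for every letter `z` only finitely many pairs of letters
have `z` in the support of their `φ`-product. -/
def PhiDualizable (φ : Y → Y → (Y →₀ K)) : Prop :=
  ∀ z : Y, {p : Y × Y | φ p.1 p.2 z ≠ 0}.Finite

/-- Extension of an associative `φ` to nonempty words: `φ(xw) = φ(x, φ(w))`. -/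
def phiWord (φ : Y → Y → (Y →₀ K)) : List Y → (Y →₀ K)
  | [] => 0
  | [x] => Finsupp.single x 1
  | x :: y :: w => (phiWord φ (y :: w)).sum fun b k => k • φ x b

/-- `φ` is moderate: for every letter `y`, only finitely many nonempty words `w`
satisfy `⟨y, φ(w)⟩ ≠ 0`. -/
def PhiModerate (φ : Y → Y → (Y →₀ K)) : Prop :=
  ∀ y : Y, {w : List Y | w ≠ [] ∧ phiWord φ w y ≠ 0}.Finite

/-- Pairing of two polynomials (the words form an orthonormal basis). -/
def pairPP (p q : List Y →₀ K) : K := p.sum fun w a => a * q w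

/-- Pairing `⟨S, p⟩` of a series with a polynomial. -/
def pairPS (S : List Y → K) (p : List Y →₀ K) : K := p.sum fun w a => a * S w

/-- Concatenation product on `K⟨Y⟩`. -/
def concP (p q : List Y →₀ K) : List Y →₀ K :=
  p.sum fun u a => q.sum fun v b => Finsupp.single (u ++ v) (a * b)

/-- Concatenation powers. -/
def concPow (p : List Y →₀ K) : ℕ → (List Y →₀ K)
  | 0 => word []
  | n + 1 => concP p (concPow p n)

/-- Powers with respect to a bilinear product `m`. -/
def mpow (m : (List Y →₀ K) →ₗ[K] (List Y →₀ K) →ₗ[K] (List Y →₀ K))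
    (p : List Y →₀ K) : ℕ → (List Y →₀ K)
  | 0 => word []
  | n + 1 => m p (mpow m p n)

/-- `m`-product of a list of polynomials. -/
def prodM (m : (List Y →₀ K) →ₗ[K] (List Y →₀ K) →ₗ[K] (List Y →₀ K))
    (L : List (List Y →₀ K)) : List Y →₀ K :=
  L.foldr (fun p acc => m p acc) (word [])

/-- The unit series. -/
def oneS : List Y → K := fun w => if w = [] then 1 else 0

/-- Concatenation (Cauchy) product of series. -/
def mulS (S T : List Y → K) : List Y → K := fun w =>
  ∑ i ∈ Finset.range (w.length + 1), S (w.take i) * T (w.drop i)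

/-- Concatenation powers of a series. -/
def powS (S : List Y → K) : ℕ → (List Y → K)
  | 0 => oneS
  | n + 1 => mulS S (powS S n)

/-- Concatenation product of a list of series. -/
def prodS (L : List (List Y → K)) : List Y → K := L.foldr (fun S acc => mulS S acc) oneS

/-- The coproduct `Δ_{⧢_φ}` dual to `m`, on series: `Δ(S)(u,v) = ⟨S, u ⧢_φ v⟩`. -/
def DeltaS (m : (List Y →₀ K) →ₗ[K] (List Y →₀ K) →ₗ[K] (List Y →₀ K))
    (S : List Y → K) : List Y × List Y → K :=
  fun p => pairPS S (m (word p.1) (word p.2))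

/-- `S` is primitive: `Δ_{⧢_φ}(S) = S ⊗ 1 + 1 ⊗ S`. -/
def PrimS (m : (List Y →₀ K) →ₗ[K] (List Y →₀ K) →ₗ[K] (List Y →₀ K))
    (S : List Y → K) : Prop :=
  ∀ u v : List Y, DeltaS m S (u, v) =
    (if v = [] then S u else 0) + (if u = [] then S v else 0)

/-- `S` is group-like: `⟨S,1⟩ = 1` and `Δ_{⧢_φ}(S) = S ⊗ S`. -/
def GroupLikeS (m : (List Y →₀ K) →ₗ[K] (List Y →₀ K) →ₗ[K] (List Y →₀ K))
    (S : List Y → K) : Prop :=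
  S [] = 1 ∧ ∀ u v : List Y, DeltaS m S (u, v) = S u * S v

/-- `Δfn` is the (finitely supported) dual coproduct witnessing dualizability of `m`:
`⟨u ⧢_φ v, w⟩ = ⟨u ⊗ v, Δ(w)⟩`. -/
def IsDualWitness (m : (List Y →₀ K) →ₗ[K] (List Y →₀ K) →ₗ[K] (List Y →₀ K))
    (Δfn : List Y → (List Y × List Y →₀ K)) : Prop :=
  ∀ u v w : List Y, (m (word u) (word v)) w = Δfn w (u, v)

/-- All factorizations of a word into nonempty blocks. -/
def cuts : List Y → List (List (List Y))
  | [] => [[]]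
  | a :: w =>
    (cuts w).flatMap fun parts =>
      match parts with
      | [] => [[[a]]]
      | p :: ps => [[a] :: p :: ps, (a :: p) :: ps]

/-- The extended Eulerian projector `π₁` on series:
`π₁(S) = Σ_{k≥1} ((-1)^{k-1}/k) Σ_{u_1⋯u_k = w, u_i ∈ Y⁺} ⟨S, u_1 ⧢_φ ⋯ ⧢_φ u_k⟩ w`. -/
def piOneS (m : (List Y →₀ K) →ₗ[K] (List Y →₀ K) →ₗ[K] (List Y →₀ K))
    (S : List Y → K) : List Y → K := fun w =>
  ((cuts w).map fun parts =>
    algebraMap ℚ K ((-1) ^ (parts.length - 1) / (parts.length : ℚ)) *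
      pairPS S (prodM m (parts.map word))).sum

/-- Logarithm of a series `S` with `⟨S,1⟩ = 1`. -/
def logS (S : List Y → K) : List Y → K := fun w =>
  ∑ n ∈ Finset.Icc 1 w.length,
    algebraMap ℚ K ((-1) ^ (n - 1) / (n : ℚ)) * powS (fun t => S t - oneS t) n w

/-- Convolution of endomorphisms (valued in series), using a dual coproduct witness. -/
def convT (Δfn : List Y → (List Y × List Y →₀ K))
    (f g : (List Y →₀ K) → (List Y → K)) : (List Y →₀ K) → (List Y → K) :=
  fun P w => P.sum fun t a =>
    a * (Δfn t).sum fun p c => c * mulS (f (word p.1)) (g (word p.2)) w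

/-- The convolution unit `e = 1 ∘ ε`. -/
def eT : (List Y →₀ K) → (List Y → K) := fun P w => if w = [] then P [] else 0

/-- Convolution powers `π₁^{⋆ n}` of the Eulerian projector. -/
def convPowPi (m : (List Y →₀ K) →ₗ[K] (List Y →₀ K) →ₗ[K] (List Y →₀ K))
    (Δfn : List Y → (List Y × List Y →₀ K)) : ℕ → ((List Y →₀ K) → (List Y → K))
  | 0 => eT
  | n + 1 => convT Δfn (fun P => piOneS m fun t => P t) (convPowPi m Δfn n)

/-- Lyndon words: nonempty and lexicographically smaller than each proper suffix. -/
def IsLyndon [LinearOrder Y] (w : List Y) : Prop :=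
  w ≠ [] ∧ ∀ u v : List Y, u ≠ [] → v ≠ [] → w = u ++ v → List.Lex (· < ·) w v

/-- Strictly decreasing lists of Lyndon words with positive exponents,
indexing monomials in Lyndon words. -/
abbrev DecLyn (Y : Type*) [LinearOrder Y] :=
  {s : List (List Y × ℕ) // (∀ p ∈ s, IsLyndon p.1 ∧ 0 < p.2) ∧
    s.Chain' fun a b => List.Lex (· < ·) b.1 a.1}

/-- `⧢_φ`-monomial `l₁^{⧢ i₁} ⧢ ⋯ ⧢ l_k^{⧢ i_k}`. -/
def shMonomial (m : (List Y →₀ K) →ₗ[K] (List Y →₀ K) →ₗ[K] (List Y →₀ K))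
    (s : List (List Y × ℕ)) : List Y →₀ K :=
  s.foldr (fun p acc => m (mpow m (word p.1) p.2) acc) (word [])

/-- Concatenation monomial `Π_{l₁}^{i₁} ⋯ Π_{l_k}^{i_k}` in a family `Pi`. -/
def concMonomial (Pi : List Y → (List Y →₀ K)) (s : List (List Y × ℕ)) : List Y →₀ K :=
  s.foldr (fun p acc => concP (concPow (Pi p.1) p.2) acc) (word [])

/-- The singleton index `l¹ ∈ DecLyn Y` attached to a Lyndon word. -/
def singleIdx [LinearOrder Y] (l : List Y) (hl : IsLyndon l) : DecLyn Y :=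
  ⟨[(l, 1)], ⟨fun p hp => by
      rw [List.mem_singleton] at hp; subst hp; exact ⟨hl, Nat.one_pos⟩,
    List.isChain_singleton _⟩⟩

/-- `(s, r)` is the standard factorization of the Lyndon word `l`:
`l = sr` with `s, r` nonempty and `r` the lexicographically least proper suffix. -/
def StdFact [LinearOrder Y] (l s r : List Y) : Prop :=
  l = s ++ r ∧ s ≠ [] ∧ r ≠ [] ∧
  ∀ s' r' : List Y, l = s' ++ r' → s' ≠ [] → r' ≠ [] → r = r' ∨ List.Lex (· < ·) r r'

/-- `Pi` is the family defined by `Π_y = π₁(y)` on letters and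
`Π_l = [Π_s, Π_r]` for the standard factorization `(s,r)` of a Lyndon word `l`. -/
def IsPiFamily [LinearOrder Y]
    (m : (List Y →₀ K) →ₗ[K] (List Y →₀ K) →ₗ[K] (List Y →₀ K))
    (Pi : List Y → (List Y →₀ K)) : Prop :=
  (∀ y : Y, ∀ w : List Y, Pi [y] w = piOneS m (fun t => (word [y] : List Y →₀ K) t) w) ∧
  ∀ l s r : List Y, IsLyndon l → StdFact l s r →
    Pi l = concP (Pi s) (Pi r) - concP (Pi r) (Pi s)

/-- Multiplication of double series (concatenation on both factors). -/
def mulDS (S T : List Y × List Y → K) : List Y × List Y → K := fun p =>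
  ∑ i ∈ Finset.range (p.1.length + 1), ∑ j ∈ Finset.range (p.2.length + 1),
    S (p.1.take i, p.2.take j) * T (p.1.drop i, p.2.drop j)

/-- The image of a letter: `Δ(y_s) = y_s ⊗ 1 + 1 ⊗ y_s + Σ_{n,m} γ^{y_s}_{y_n,y_m} y_n ⊗ y_m`,
as a double series. -/
def Dletter (φ : Y → Y → (Y →₀ K)) (a : Y) : List Y × List Y → K := fun p =>
  (if p = ([a], []) then 1 else 0) + (if p = ([], [a]) then 1 else 0) +
  (match p with
   | ([n], [m]) => φ n m a
   | _ => 0)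

/-- The `conc`-morphism `Δ` into double series, defined on the letters by `Dletter`. -/
def DeltaRec (φ : Y → Y → (Y →₀ K)) : List Y → (List Y × List Y → K)
  | [] => fun p => if p = ([], []) then 1 else 0
  | a :: w => mulDS (Dletter φ a) (DeltaRec φ w)

/-! Both sides obey the same recursion in `w`. At the empty word only `1 ⧢_φ 1` has a nonzero
coefficient. For `w = c w'`, the defining recursion of `⧢_φ` gives
`⟨au ⧢_φ bv, c w'⟩ = [a = c] ⟨u ⧢_φ bv, w'⟩ + [b = c] ⟨au ⧢_φ v, w'⟩ + γ^c_{a,b} ⟨u ⧢_φ v, w'⟩`,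
while `Δ(c w') = Δ(c) Δ(w')` and `Δ(c)` has only terms of bidegree at most `(1, 1)`, so left
multiplication by `Δ(c)` produces exactly these three terms. -/

section

omit [Algebra ℚ K]

/-- `T ↦ mulDS (Dletter φ c) T` written out; it is also the recursion of the coefficients of
`⧢_φ` at the word `c :: w`. -/
def shuffleStep (φ : Y → Y → (Y →₀ K)) (c : Y) (T : List Y × List Y → K) :
    List Y × List Y → K
  | ([], []) => 0
  | ([], b :: v) => if b = c then T ([], v) else 0
  | (a :: u, []) => if a = c then T (u, []) else 0
  | (a :: u, b :: v) =>
    (if a = c then T (u, b :: v) else 0) + (if b = c then T (a :: u, v) else 0) +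
      φ a b c * T (u, v)

lemma Dletter_eq_zero (φ : Y → Y → (Y →₀ K)) (c : Y) {x y : List Y}
    (h : 1 < x.length ∨ 1 < y.length) : Dletter φ c (x, y) = 0 := by
  rcases x with _ | ⟨a, _ | ⟨a', x⟩⟩ <;> rcases y with _ | ⟨b, _ | ⟨b', y⟩⟩ <;>
    simp_all [Dletter]

omit [DecidableEq Y] in
lemma mulDS_eq_sum_of_length_le_one {S : List Y × List Y → K}
    (hS : ∀ x y : List Y, 1 < x.length ∨ 1 < y.length → S (x, y) = 0)
    (T : List Y × List Y → K) (x y : List Y) :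
    mulDS S T (x, y) =
      ∑ i ∈ Finset.range (min 1 x.length + 1), ∑ j ∈ Finset.range (min 1 y.length + 1),
        S (x.take i, y.take j) * T (x.drop i, y.drop j) := by
  have hsub : ∀ n, Finset.range (min 1 n + 1) ⊆ Finset.range (n + 1) := fun n =>
    Finset.range_subset_range.mpr (by omega)
  have hS' : ∀ i j, i ≤ x.length → j ≤ y.length → 1 < i ∨ 1 < j →
      S (x.take i, y.take j) = 0 := fun i j hi hj h =>
    hS _ _ (by simp only [List.length_take]; omega)
  simp only [mulDS]
  rw [← Finset.sum_subset (hsub _) fun i hi hi' => Finset.sum_eq_zero fun j hj => by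
    simp only [Finset.mem_range] at hi hi' hj
    rw [hS' i j (by omega) (by omega) (by omega), zero_mul]]
  refine Finset.sum_congr rfl fun i hi => ?_
  rw [← Finset.sum_subset (hsub _) fun j hj hj' => by
    simp only [Finset.mem_range] at hi hj hj'
    rw [hS' i j (by omega) (by omega) (by omega), zero_mul]]

lemma mulDS_Dletter (φ : Y → Y → (Y →₀ K)) (c : Y) (T : List Y × List Y → K) :
    mulDS (Dletter φ c) T = shuffleStep φ c T := by
  funext ⟨x, y⟩
  rw [mulDS_eq_sum_of_length_le_one (fun _ _ => Dletter_eq_zero φ c)]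
  rcases x with _ | ⟨a, u⟩ <;> rcases y with _ | ⟨b, v⟩
  · simp [Dletter, shuffleStep]
  · simp [Finset.sum_range_succ, Dletter, shuffleStep]
  · simp [Finset.sum_range_succ, Dletter, shuffleStep]
  · simp [Finset.sum_range_succ, Dletter, shuffleStep]
    ring

omit [DecidableEq Y] in
lemma consL_apply_nil (a : Y) (p : List Y →₀ K) : consL a p [] = 0 :=
  Finsupp.mapDomain_of_notMem_range _ _ fun ⟨_, h⟩ => List.cons_ne_nil _ _ h

lemma consL_apply_cons (a c : Y) (p : List Y →₀ K) (w : List Y) :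
    consL a p (c :: w) = if a = c then p w else 0 := by
  split_ifs with h
  · subst h
    exact Finsupp.mapDomain_apply List.cons_injective p w
  · exact Finsupp.mapDomain_of_notMem_range _ _ fun ⟨_, ht⟩ => h (List.cons.inj ht).1

lemma sum_smul_consL_apply_cons (f : Y →₀ K) (p : List Y →₀ K) (c : Y) (w : List Y) :
    (f.sum fun e k => k • consL e p) (c :: w) = f c * p w := by
  rw [Finsupp.sum_apply]
  simp only [Finsupp.smul_apply, consL_apply_cons, smul_eq_mul, mul_ite, mul_zero,
    Finsupp.sum_ite_eq']
  exact ite_eq_left_iff.mpr fun h => by rw [Finsupp.notMem_support_iff.mp h, zero_mul]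

variable {φ : Y → Y → (Y →₀ K)}
  {m : (List Y →₀ K) →ₗ[K] (List Y →₀ K) →ₗ[K] (List Y →₀ K)}

lemma IsPhiShuffle.coeff_nil (hm : IsPhiShuffle φ m) (u v : List Y) :
    m (word u) (word v) [] = if (u, v) = ([], []) then 1 else 0 := by
  rcases u with _ | ⟨a, u⟩ <;> rcases v with _ | ⟨b, v⟩
  · rw [hm.1]; simp [word]
  · rw [hm.1]; simp [word]
  · rw [hm.2.1]; simp [word]
  · rw [hm.2.2, Finsupp.add_apply, Finsupp.add_apply, Finsupp.sum_apply]
    simp [consL_apply_nil]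

lemma IsPhiShuffle.coeff_cons (hm : IsPhiShuffle φ m) (u v : List Y) (c : Y) (w : List Y) :
    m (word u) (word v) (c :: w) =
      shuffleStep φ c (fun p => m (word p.1) (word p.2) w) (u, v) := by
  rcases u with _ | ⟨a, u⟩ <;> rcases v with _ | ⟨b, v⟩
  · rw [hm.1]; simp [word, shuffleStep]
  · simp only [shuffleStep, hm.1]
    simp [word, Finsupp.single_apply, ite_and]
  · simp only [shuffleStep, hm.2.1]
    simp [word, Finsupp.single_apply, ite_and]
  · rw [hm.2.2]
    simp only [Finsupp.add_apply, consL_apply_cons, sum_smul_consL_apply_cons, shuffleStep]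

end

/-- `⟨u ⧢_φ v, w⟩ = ⟨u ⊗ v, Δ(w)⟩` for all words `u, v, w`. -/
theorem phiShuffle_pairing_DeltaRec (φ : Y → Y → (Y →₀ K))
    (m : (List Y →₀ K) →ₗ[K] (List Y →₀ K) →ₗ[K] (List Y →₀ K))
    (hm : IsPhiShuffle φ m) :
    ∀ u v w : List Y, (m (word u) (word v)) w = DeltaRec φ w (u, v) := by
  intro u v w
  induction w generalizing u v with
  | nil => exact hm.coeff_nil u v
  | cons c w ih =>
    have hcoeff : (fun p : List Y × List Y => m (word p.1) (word p.2) w) = DeltaRec φ w :=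
      funext fun p => ih p.1 p.2
    rw [hm.coeff_cons, hcoeff, DeltaRec, mulDS_Dletter]
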